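/- (Classification of singularities, pole case.) Assume i₁, i₂, i₃ are linearly independent over ℝ and f₁(E₃) = f₂(E₃) = ℂ. Let ζ₀ ∈ E₃, ξ₁₀ = f₁(ζ₀), ξ₂₀ = f₂(ζ₀), 0 < R ≤ ∞. Let F₁, F₃ be holomorphic on {ξ : 0 < |ξ − ξ₁₀| < R} and F₂, F₄ holomorphic on {ξ : 0 < |ξ − ξ₂₀| < R}, and define Φ on K⁰_ζ = {ζ ∈ E₃ : 0 < |f₁(ζ) − ξ₁₀| < R, 0 < |f₂(ζ) − ξ₂₀| < R} by Φ(ζ) = F₁(f₁(ζ))e₁ + F₂(f₂(ζ))e₂ + F₃(f₁(ζ))e₃ + F₄(f₂(ζ))e₄. If each of F₁, F₂, F₃, F₄ has only finitely many nonzero Laurent coefficients of negative index and at least one of them has a nonzero Laurent coefficient of negative index (i.e., the principal part of the Laurent expansion of Φ is nonzero but contains only finitely many terms), then there exists k ∈ {1, 2} such that at every point w ∈ K̃⁰_ζ = {ζ ∈ E₃ : |f₁(ζ) − ξ₁₀| < R, |f₂(ζ) − ξ₂₀| < R} of the form w = ζ₀ + e* with e* ∈ L^k_ζ, one has ‖Φ(ζ)‖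 → ∞ as ζ → w with ζ ranging over K⁰_ζ. -/

import Mathlib

noncomputable section

/-- The algebra of complex quaternions ℍ(ℂ): quaternions over ℂ with
I² = J² = K² = -1, IJ = -JI = K, JK = -KJ = I, KI = -IK = J. -/
abbrev HC : Type := Quaternion ℂ

/-- The quaternion unit I. -/
def Iq : HC := ⟨0, 1, 0, 0⟩
/-- The quaternion unit J. -/
def Jq : HC := ⟨0, 0, 1, 0⟩
/-- The quaternion unit K. -/
def Kq : HC := ⟨0, 0, 0, 1⟩

/-- e₁ = (1 + iI)/2. -/
def e1 : HC := (2 : ℂ)⁻¹ • (1 + Complex.I • Iq)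
/-- e₂ = (1 - iI)/2. -/
def e2 : HC := (2 : ℂ)⁻¹ • (1 - Complex.I • Iq)
/-- e₃ = (iJ - K)/2. -/
def e3 : HC := (2 : ℂ)⁻¹ • (Complex.I • Jq - Kq)
/-- e₄ = (iJ + K)/2. -/
def e4 : HC := (2 : ℂ)⁻¹ • (Complex.I • Jq + Kq)

/-- The coefficient c₁ of q in the basis {e₁,e₂,e₃,e₄} (q = c₁e₁ + c₂e₂ + c₃e₃ + c₄e₄). -/
def coord1 (q : HC) : ℂ := q.re - Complex.I * q.imI
/-- The coefficient c₂ of q in the basis {e₁,e₂,e₃,e₄}. -/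
def coord2 (q : HC) : ℂ := q.re + Complex.I * q.imI
/-- The coefficient c₃ of q in the basis {e₁,e₂,e₃,e₄}. -/
def coord3 (q : HC) : ℂ := -(Complex.I * q.imJ) - q.imK
/-- The coefficient c₄ of q in the basis {e₁,e₂,e₃,e₄}. -/
def coord4 (q : HC) : ℂ := -(Complex.I * q.imJ) + q.imK

/-- The norm ‖c‖ = √(|c₁|² + |c₂|² + |c₃|² + |c₄|²) of c = c₁e₁ + c₂e₂ + c₃e₃ + c₄e₄. -/
def hnorm (q : HC) : ℝ :=
  Real.sqrt (‖(coord1 q)‖ ^ 2 + ‖(coord2 q)‖ ^ 2 +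
    ‖(coord3 q)‖ ^ 2 + ‖(coord4 q)‖ ^ 2)

/-- i₂ = a₁e₁ + a₂e₂. -/
def i2 (a₁ a₂ : ℂ) : HC := a₁ • e1 + a₂ • e2
/-- i₃ = b₁e₁ + b₂e₂. -/
def i3 (b₁ b₂ : ℂ) : HC := b₁ • e1 + b₂ • e2

/-- ζ = x·i₁ + y·i₂ + z·i₃ with i₁ = 1. -/
def zeta (a₁ a₂ b₁ b₂ : ℂ) (x y z : ℝ) : HC :=
  (x : ℂ) • (1 : HC) + (y : ℂ) • i2 a₁ a₂ + (z : ℂ) • i3 b₁ b₂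

/-- E₃ = {x i₁ + y i₂ + z i₃ : x, y, z ∈ ℝ}. -/
def E3 (a₁ a₂ b₁ b₂ : ℂ) : Set HC :=
  {q | ∃ x y z : ℝ, q = zeta a₁ a₂ b₁ b₂ x y z}

/-- ξ₁ = f₁(ζ) = x + y a₁ + z b₁. -/
def xi1 (a₁ b₁ : ℂ) (x y z : ℝ) : ℂ := (x : ℂ) + (y : ℂ) * a₁ + (z : ℂ) * b₁
/-- ξ₂ = f₂(ζ) = x + y a₂ + z b₂. -/
def xi2 (a₂ b₂ : ℂ) (x y z : ℝ) : ℂ := (x : ℂ) + (y : ℂ) * a₂ + (z : ℂ) * b₂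


/-- The punctured domain K⁰_ζ = {ζ ∈ E₃ : 0 < |f₁(ζ)-ξ₁₀| < R, 0 < |f₂(ζ)-ξ₂₀| < R}. -/
def K0 (a₁ a₂ b₁ b₂ ξ₁₀ ξ₂₀ : ℂ) (R : ENNReal) : Set HC :=
  {q | ∃ x y z : ℝ, q = zeta a₁ a₂ b₁ b₂ x y z ∧
    0 < ‖(xi1 a₁ b₁ x y z - ξ₁₀)‖ ∧
    ENNReal.ofReal (‖(xi1 a₁ b₁ x y z - ξ₁₀)‖) < R ∧
    0 < ‖(xi2 a₂ b₂ x y z - ξ₂₀)‖ ∧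
    ENNReal.ofReal (‖(xi2 a₂ b₂ x y z - ξ₂₀)‖) < R}

/-- Φ has the finite limit A as ζ → w with ζ ranging over S (w.r.t. the norm of ℍ(ℂ)). -/
def TendstoAt (Φ : HC → HC) (S : Set HC) (w A : HC) : Prop :=
  ∀ ε > (0 : ℝ), ∃ δ > (0 : ℝ), ∀ q ∈ S, hnorm (q - w) < δ → hnorm (Φ q - A) < ε

/-- ‖Φ(ζ)‖ → ∞ as ζ → w with ζ ranging over S. -/
def TendstoInftyAt (Φ : HC → HC) (S : Set HC) (w : HC) : Prop :=
  ∀ M : ℝ, ∃ δ > (0 : ℝ), ∀ q ∈ S, hnorm (q - w) < δ → M < hnorm (Φ q)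

/-!
The paper's f₁ and f₂ are the e₁- and e₂-coordinates of a point of E₃, and the norm of ℍ(ℂ)
dominates each coordinate. A Laurent series with finitely many, but not only zero, coefficients
of negative index is `(ξ - ξ₀) ^ n₀` times a power series that does not vanish at the centre,
for some `n₀ < 0`; so it defines a meromorphic function of negative order, whose modulus tends
to infinity at `ξ₀`. If F₁ or F₃ has such a pole, take k = 1: when e* ∈ L¹, the point
w = ζ₀ + e* has f₁(w) = ξ₁₀, so |f₁(ζ) - ξ₁₀| ≤ ‖ζ - w‖, while ‖Φ(ζ)‖ ≥ max(|F₁(f₁ ζ)|, |F₃(f₁ ζ)|).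
Otherwise F₂ or F₄ has a pole and k = 2.
-/

open Filter Topology

theorem hasSum_nat_shift_of_eq_zero_of_lt {K : Type*} [Field K] [TopologicalSpace K]
    [IsTopologicalRing K] {g : ℤ → K} {n₀ : ℤ} (hg : ∀ n < n₀, g n = 0) {t s : K} (ht : t ≠ 0)
    (h : HasSum (fun n : ℤ => g n * t ^ n) s) :
    HasSum (fun k : ℕ => g (n₀ + k) * t ^ k) (s * t ^ (-n₀)) := by
  have hshift : HasSum (fun n : ℤ => g n * t ^ (n - n₀)) (s * t ^ (-n₀)) := by
    simpa only [mul_assoc, ← zpow_add₀ ht, sub_eq_add_neg] using h.mul_right (t ^ (-n₀))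
  have hinj : Function.Injective (fun k : ℕ => n₀ + k) := fun _ _ h => by simpa using h
  rw [← hinj.hasSum_iff] at hshift
  · simpa [Function.comp_def, zpow_natCast] using hshift
  · intro n hn
    have : n < n₀ := not_le.1 fun h => hn ⟨(n - n₀).toNat, by simp; omega⟩
    simp [hg n this]

section Laurent

variable {𝕜 : Type*} [NontriviallyNormedField 𝕜] [CompleteSpace 𝕜]

theorem analyticAt_ofScalarsSum_of_hasSum {c : ℕ → 𝕜} {r s : 𝕜} (hr : r ≠ 0)
    (h : HasSum (fun k => c k * r ^ k) s) :
    AnalyticAt 𝕜 (FormalMultilinearSeries.ofScalarsSum (E := 𝕜) c) 0 := by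
  have hrad : (‖r‖₊ : ENNReal) ≤ (FormalMultilinearSeries.ofScalars 𝕜 c).radius :=
    (FormalMultilinearSeries.ofScalars 𝕜 c).le_radius_of_tendsto (l := 0) <| by
      simpa [norm_mul, norm_pow] using h.summable.tendsto_atTop_zero.norm
  exact ((FormalMultilinearSeries.ofScalars 𝕜 c).hasFPowerSeriesOnBall
    (lt_of_lt_of_le (by simpa using hr) hrad)).analyticAt

theorem meromorphicOrderAt_eq_of_hasSum_laurent {F : 𝕜 → 𝕜} {g : ℤ → 𝕜} {ξ₀ : 𝕜} {n₀ : ℤ}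
    (hF : ∀ᶠ ξ in 𝓝[≠] ξ₀, HasSum (fun n => g n * (ξ - ξ₀) ^ n) (F ξ))
    (hlow : ∀ n < n₀, g n = 0) (hn₀ : g n₀ ≠ 0) :
    meromorphicOrderAt F ξ₀ = n₀ := by
  set G : 𝕜 → 𝕜 := fun ξ =>
    FormalMultilinearSeries.ofScalarsSum (E := 𝕜) (fun k => g (n₀ + k)) (ξ - ξ₀)
  obtain ⟨ξ₁, hξ₁, hne₁⟩ := (hF.and self_mem_nhdsWithin).exists
  have hG : AnalyticAt 𝕜 G ξ₀ := by
    refine AnalyticAt.comp_of_eq ?_ (by fun_prop) (sub_self ξ₀)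
    exact analyticAt_ofScalarsSum_of_hasSum (sub_ne_zero.2 hne₁)
      (hasSum_nat_shift_of_eq_zero_of_lt hlow (sub_ne_zero.2 hne₁) hξ₁)
  have hFG : ∀ᶠ ξ in 𝓝[≠] ξ₀, F ξ = (ξ - ξ₀) ^ n₀ • G ξ := by
    filter_upwards [hF, self_mem_nhdsWithin] with ξ hξ hne
    have ht : ξ - ξ₀ ≠ 0 := sub_ne_zero.2 hne
    simp only [G, FormalMultilinearSeries.ofScalars_sum_eq, smul_eq_mul,
      (hasSum_nat_shift_of_eq_zero_of_lt hlow ht hξ).tsum_eq, zpow_neg]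
    field_simp
  have hmero : MeromorphicAt F ξ₀ :=
    ((MeromorphicAt.id ξ₀).sub (MeromorphicAt.const ξ₀ ξ₀)).zpow n₀ |>.smul hG.meromorphicAt
      |>.congr (hFG.mono fun _ h => h.symm)
  exact (meromorphicOrderAt_eq_int_iff hmero).2 ⟨G, hG, by simp [G, hn₀], hFG⟩

theorem tendsto_cobounded_of_hasSum_laurent {F : 𝕜 → 𝕜} {g : ℤ → 𝕜} {ξ₀ : 𝕜}
    (hF : ∀ᶠ ξ in 𝓝[≠] ξ₀, HasSum (fun n => g n * (ξ - ξ₀) ^ n) (F ξ))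
    (hbdd : ∃ N, ∀ n < N, g n = 0) (hneg : ∃ n < 0, g n ≠ 0) :
    Tendsto F (𝓝[≠] ξ₀) (Bornology.cobounded 𝕜) := by
  obtain ⟨n₀, hn₀, hleast⟩ := Int.exists_least_of_bdd (P := (g · ≠ 0))
    (hbdd.imp fun _ hN n hn => not_lt.1 fun h => hn (hN n h)) (hneg.imp fun _ h => h.2)
  obtain ⟨n, hn, hgn⟩ := hneg
  apply tendsto_cobounded_of_meromorphicOrderAt_neg
  rw [meromorphicOrderAt_eq_of_hasSum_laurent hF
    (fun m hm => not_not.1 (mt (hleast m) (not_le.2 hm))) hn₀]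
  exact_mod_cast (hleast n hgn).trans_lt hn

theorem tendsto_max_norm_atTop_of_hasSum_laurent {F G : 𝕜 → 𝕜} {f g : ℤ → 𝕜} {ξ₀ : 𝕜}
    (hF : ∀ᶠ ξ in 𝓝[≠] ξ₀, HasSum (fun n => f n * (ξ - ξ₀) ^ n) (F ξ))
    (hG : ∀ᶠ ξ in 𝓝[≠] ξ₀, HasSum (fun n => g n * (ξ - ξ₀) ^ n) (G ξ))
    (hbdd : ∃ N, ∀ n < N, f n = 0 ∧ g n = 0) (hneg : ∃ n < 0, f n ≠ 0 ∨ g n ≠ 0) :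
    Tendsto (fun ξ => max ‖F ξ‖ ‖G ξ‖) (𝓝[≠] ξ₀) atTop := by
  obtain ⟨n, hn, hf | hg⟩ := hneg
  · refine tendsto_atTop_mono (fun _ => le_max_left _ _) (tendsto_norm_atTop_iff_cobounded.2 ?_)
    exact tendsto_cobounded_of_hasSum_laurent hF (hbdd.imp fun _ h m hm => (h m hm).1) ⟨n, hn, hf⟩
  · refine tendsto_atTop_mono (fun _ => le_max_right _ _) (tendsto_norm_atTop_iff_cobounded.2 ?_)
    exact tendsto_cobounded_of_hasSum_laurent hG (hbdd.imp fun _ h m hm => (h m hm).2) ⟨n, hn, hg⟩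

end Laurent

theorem eventually_nhdsNE_of_forall_punctured_eball {E : Type*} [NormedAddCommGroup E]
    {x₀ : E} {R : ENNReal} (hR : 0 < R) {P : E → Prop}
    (h : ∀ x, 0 < ‖x - x₀‖ → ENNReal.ofReal ‖x - x₀‖ < R → P x) : ∀ᶠ x in 𝓝[≠] x₀, P x := by
  filter_upwards [nhdsWithin_le_nhds (Metric.eball_mem_nhds x₀ hR), self_mem_nhdsWithin]
    with x hx hne
  rw [Metric.mem_eball, edist_dist, dist_eq_norm] at hx
  exact h x (norm_pos_iff.2 (sub_ne_zero.2 hne)) hx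

open scoped Quaternion

section Basis

variable (c₁ c₂ c₃ c₄ : ℂ)

lemma coord1_basis : coord1 (c₁ • e1 + c₂ • e2 + c₃ • e3 + c₄ • e4) = c₁ := by
  simp [coord1, e1, e2, e3, e4]; simp [Iq, Jq, Kq]; ring_nf; simp [Complex.I_sq]; ring

lemma coord2_basis : coord2 (c₁ • e1 + c₂ • e2 + c₃ • e3 + c₄ • e4) = c₂ := by
  simp [coord2, e1, e2, e3, e4]; simp [Iq, Jq, Kq]; ring_nf; simp [Complex.I_sq]; ring

lemma coord3_basis : coord3 (c₁ • e1 + c₂ • e2 + c₃ • e3 + c₄ • e4) = c₃ := by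
  simp [coord3, e1, e2, e3, e4]; simp [Iq, Jq, Kq]; ring_nf; simp [Complex.I_sq]; ring

lemma coord4_basis : coord4 (c₁ • e1 + c₂ • e2 + c₃ • e3 + c₄ • e4) = c₄ := by
  simp [coord4, e1, e2, e3, e4]; simp [Iq, Jq, Kq]; ring_nf; simp [Complex.I_sq]; ring

end Basis

lemma e1_add_e2 : e1 + e2 = 1 := by
  simp only [e1, e2]; module

lemma zeta_eq_basis (a₁ a₂ b₁ b₂ : ℂ) (x y z : ℝ) :
    zeta a₁ a₂ b₁ b₂ x y z =
      xi1 a₁ b₁ x y z • e1 + xi2 a₂ b₂ x y z • e2 + (0 : ℂ) • e3 + (0 : ℂ) • e4 := by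
  rw [zeta, i2, i3, xi1, xi2, ← e1_add_e2]; module

lemma coord1_zeta (a₁ a₂ b₁ b₂ : ℂ) (x y z : ℝ) :
    coord1 (zeta a₁ a₂ b₁ b₂ x y z) = xi1 a₁ b₁ x y z := by
  rw [zeta_eq_basis, coord1_basis]

lemma coord2_zeta (a₁ a₂ b₁ b₂ : ℂ) (x y z : ℝ) :
    coord2 (zeta a₁ a₂ b₁ b₂ x y z) = xi2 a₂ b₂ x y z := by
  rw [zeta_eq_basis, coord2_basis]

lemma coord1_add (p q : HC) : coord1 (p + q) = coord1 p + coord1 q := by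
  simp only [coord1, Quaternion.re_add, Quaternion.imI_add]; ring

lemma coord2_add (p q : HC) : coord2 (p + q) = coord2 p + coord2 q := by
  simp only [coord2, Quaternion.re_add, Quaternion.imI_add]; ring

lemma coord1_sub (p q : HC) : coord1 (p - q) = coord1 p - coord1 q := by
  simp only [coord1, Quaternion.re_sub, Quaternion.imI_sub]; ring

lemma coord2_sub (p q : HC) : coord2 (p - q) = coord2 p - coord2 q := by
  simp only [coord2, Quaternion.re_sub, Quaternion.imI_sub]; ring

section Norm

variable (q : HC)

lemma norm_coord1_le_hnorm : ‖coord1 q‖ ≤ hnorm q := by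
  apply Real.le_sqrt_of_sq_le
  linarith [sq_nonneg ‖coord2 q‖, sq_nonneg ‖coord3 q‖, sq_nonneg ‖coord4 q‖]

lemma norm_coord2_le_hnorm : ‖coord2 q‖ ≤ hnorm q := by
  apply Real.le_sqrt_of_sq_le
  linarith [sq_nonneg ‖coord1 q‖, sq_nonneg ‖coord3 q‖, sq_nonneg ‖coord4 q‖]

lemma norm_coord3_le_hnorm : ‖coord3 q‖ ≤ hnorm q := by
  apply Real.le_sqrt_of_sq_le
  linarith [sq_nonneg ‖coord1 q‖, sq_nonneg ‖coord2 q‖, sq_nonneg ‖coord4 q‖]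

lemma norm_coord4_le_hnorm : ‖coord4 q‖ ≤ hnorm q := by
  apply Real.le_sqrt_of_sq_le
  linarith [sq_nonneg ‖coord1 q‖, sq_nonneg ‖coord2 q‖, sq_nonneg ‖coord3 q‖]

lemma max_norm_coeff13_le_hnorm (c₁ c₂ c₃ c₄ : ℂ) :
    max ‖c₁‖ ‖c₃‖ ≤ hnorm (c₁ • e1 + c₂ • e2 + c₃ • e3 + c₄ • e4) := by
  have h₁ := norm_coord1_le_hnorm (c₁ • e1 + c₂ • e2 + c₃ • e3 + c₄ • e4)
  have h₃ := norm_coord3_le_hnorm (c₁ • e1 + c₂ • e2 + c₃ • e3 + c₄ • e4)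
  rw [coord1_basis] at h₁
  rw [coord3_basis] at h₃
  exact max_le h₁ h₃

lemma max_norm_coeff24_le_hnorm (c₁ c₂ c₃ c₄ : ℂ) :
    max ‖c₂‖ ‖c₄‖ ≤ hnorm (c₁ • e1 + c₂ • e2 + c₃ • e3 + c₄ • e4) := by
  have h₂ := norm_coord2_le_hnorm (c₁ • e1 + c₂ • e2 + c₃ • e3 + c₄ • e4)
  have h₄ := norm_coord4_le_hnorm (c₁ • e1 + c₂ • e2 + c₃ • e3 + c₄ • e4)
  rw [coord2_basis] at h₂
  rw [coord4_basis] at h₄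
  exact max_le h₂ h₄

end Norm

theorem tendstoInftyAt_of_tendsto_comp {Φ : HC → HC} {S : Set HC} {w : HC} {π : HC → ℂ}
    {g : ℂ → ℝ} (hπ : ∀ q ∈ S, ‖π q - π w‖ ≤ hnorm (q - w)) (hne : ∀ q ∈ S, π q ≠ π w)
    (hle : ∀ q ∈ S, g (π q) ≤ hnorm (Φ q)) (hg : Tendsto g (𝓝[≠] (π w)) atTop) :
    TendstoInftyAt Φ S w := by
  intro M
  obtain ⟨δ, hδ, hM⟩ := Metric.mem_nhdsWithin_iff.1 (hg.eventually_gt_atTop M)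
  refine ⟨δ, hδ, fun q hq hqw => (hM ⟨?_, hne q hq⟩).trans_le (hle q hq)⟩
  rw [Metric.mem_ball, dist_eq_norm]
  exact (hπ q hq).trans_lt hqw

section K0

variable {a₁ a₂ b₁ b₂ ξ₁₀ ξ₂₀ : ℂ} {R : ENNReal} {F₁ F₂ F₃ F₄ : ℂ → ℂ} {Φ : HC → HC} {w : HC}

lemma coord_ne_and_eq_basis_of_mem_K0
    (hΦ : ∀ x y z : ℝ, 0 < ‖xi1 a₁ b₁ x y z - ξ₁₀‖ → ENNReal.ofReal ‖xi1 a₁ b₁ x y z - ξ₁₀‖ < R →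
      0 < ‖xi2 a₂ b₂ x y z - ξ₂₀‖ → ENNReal.ofReal ‖xi2 a₂ b₂ x y z - ξ₂₀‖ < R →
      Φ (zeta a₁ a₂ b₁ b₂ x y z) = F₁ (xi1 a₁ b₁ x y z) • e1 + F₂ (xi2 a₂ b₂ x y z) • e2 +
        F₃ (xi1 a₁ b₁ x y z) • e3 + F₄ (xi2 a₂ b₂ x y z) • e4)
    {q : HC} (hq : q ∈ K0 a₁ a₂ b₁ b₂ ξ₁₀ ξ₂₀ R) :
    coord1 q ≠ ξ₁₀ ∧ coord2 q ≠ ξ₂₀ ∧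
      Φ q = F₁ (coord1 q) • e1 + F₂ (coord2 q) • e2 + F₃ (coord1 q) • e3 + F₄ (coord2 q) • e4 := by
  obtain ⟨x, y, z, rfl, h₁, h₁R, h₂, h₂R⟩ := hq
  rw [coord1_zeta, coord2_zeta]
  exact ⟨sub_ne_zero.1 (norm_pos_iff.1 h₁), sub_ne_zero.1 (norm_pos_iff.1 h₂),
    hΦ x y z h₁ h₁R h₂ h₂R⟩

theorem tendstoInftyAt_K0_of_coord1
    (hΦ : ∀ q ∈ K0 a₁ a₂ b₁ b₂ ξ₁₀ ξ₂₀ R, coord1 q ≠ ξ₁₀ ∧ coord2 q ≠ ξ₂₀ ∧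
      Φ q = F₁ (coord1 q) • e1 + F₂ (coord2 q) • e2 + F₃ (coord1 q) • e3 + F₄ (coord2 q) • e4)
    (hpole : Tendsto (fun ξ => max ‖F₁ ξ‖ ‖F₃ ξ‖) (𝓝[≠] ξ₁₀) atTop) (hw : coord1 w = ξ₁₀) :
    TendstoInftyAt Φ (K0 a₁ a₂ b₁ b₂ ξ₁₀ ξ₂₀ R) w := by
  subst hw
  refine tendstoInftyAt_of_tendsto_comp (fun q _ => coord1_sub q w ▸ norm_coord1_le_hnorm _)
    (fun q hq => (hΦ q hq).1) (fun q hq => ?_) hpole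
  rw [(hΦ q hq).2.2]
  exact max_norm_coeff13_le_hnorm ..

theorem tendstoInftyAt_K0_of_coord2
    (hΦ : ∀ q ∈ K0 a₁ a₂ b₁ b₂ ξ₁₀ ξ₂₀ R, coord1 q ≠ ξ₁₀ ∧ coord2 q ≠ ξ₂₀ ∧
      Φ q = F₁ (coord1 q) • e1 + F₂ (coord2 q) • e2 + F₃ (coord1 q) • e3 + F₄ (coord2 q) • e4)
    (hpole : Tendsto (fun ξ => max ‖F₂ ξ‖ ‖F₄ ξ‖) (𝓝[≠] ξ₂₀) atTop) (hw : coord2 w = ξ₂₀) :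
    TendstoInftyAt Φ (K0 a₁ a₂ b₁ b₂ ξ₁₀ ξ₂₀ R) w := by
  subst hw
  refine tendstoInftyAt_of_tendsto_comp (fun q _ => coord2_sub q w ▸ norm_coord2_le_hnorm _)
    (fun q hq => (hΦ q hq).2.1) (fun q hq => ?_) hpole
  rw [(hΦ q hq).2.2]
  exact max_norm_coeff24_le_hnorm ..

end K0

theorem singularity_pole_general
    (a₁ a₂ b₁ b₂ : ℂ)
    (x₀ y₀ z₀ : ℝ) (R : ENNReal) (hR : 0 < R)
    (F₁ F₂ F₃ F₄ : ℂ → ℂ)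
    (Φ : HC → HC)
    (hΦ : ∀ x y z : ℝ,
      0 < ‖(xi1 a₁ b₁ x y z - xi1 a₁ b₁ x₀ y₀ z₀)‖ →
      ENNReal.ofReal (‖(xi1 a₁ b₁ x y z - xi1 a₁ b₁ x₀ y₀ z₀)‖) < R →
      0 < ‖(xi2 a₂ b₂ x y z - xi2 a₂ b₂ x₀ y₀ z₀)‖ →
      ENNReal.ofReal (‖(xi2 a₂ b₂ x y z - xi2 a₂ b₂ x₀ y₀ z₀)‖) < R →
      Φ (zeta a₁ a₂ b₁ b₂ x y z) =
        F₁ (xi1 a₁ b₁ x y z) • e1 + F₂ (xi2 a₂ b₂ x y z) • e2 +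
        F₃ (xi1 a₁ b₁ x y z) • e3 + F₄ (xi2 a₂ b₂ x y z) • e4)
    (a b c d : ℤ → ℂ)
    (ha : ∀ ξ : ℂ, 0 < ‖(ξ - xi1 a₁ b₁ x₀ y₀ z₀)‖ →
      ENNReal.ofReal (‖(ξ - xi1 a₁ b₁ x₀ y₀ z₀)‖) < R →
      HasSum (fun n : ℤ => a n * (ξ - xi1 a₁ b₁ x₀ y₀ z₀) ^ n) (F₁ ξ))
    (hc : ∀ ξ : ℂ, 0 < ‖(ξ - xi1 a₁ b₁ x₀ y₀ z₀)‖ →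
      ENNReal.ofReal (‖(ξ - xi1 a₁ b₁ x₀ y₀ z₀)‖) < R →
      HasSum (fun n : ℤ => c n * (ξ - xi1 a₁ b₁ x₀ y₀ z₀) ^ n) (F₃ ξ))
    (hb : ∀ ξ : ℂ, 0 < ‖(ξ - xi2 a₂ b₂ x₀ y₀ z₀)‖ →
      ENNReal.ofReal (‖(ξ - xi2 a₂ b₂ x₀ y₀ z₀)‖) < R →
      HasSum (fun n : ℤ => b n * (ξ - xi2 a₂ b₂ x₀ y₀ z₀) ^ n) (F₂ ξ))
    (hd : ∀ ξ : ℂ, 0 < ‖(ξ - xi2 a₂ b₂ x₀ y₀ z₀)‖ →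
      ENNReal.ofReal (‖(ξ - xi2 a₂ b₂ x₀ y₀ z₀)‖) < R →
      HasSum (fun n : ℤ => d n * (ξ - xi2 a₂ b₂ x₀ y₀ z₀) ^ n) (F₄ ξ))
    (hfin : ∃ N : ℤ, ∀ n : ℤ, n < N → a n = 0 ∧ b n = 0 ∧ c n = 0 ∧ d n = 0)
    (hnz : ∃ n : ℤ, n < 0 ∧ (a n ≠ 0 ∨ b n ≠ 0 ∨ c n ≠ 0 ∨ d n ≠ 0)) :
    (∀ u v t : ℝ, xi1 a₁ b₁ u v t = 0 →
      ENNReal.ofReal (‖(xi1 a₁ b₁ u v t)‖) < R →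
      ENNReal.ofReal (‖(xi2 a₂ b₂ u v t)‖) < R →
      TendstoInftyAt Φ (K0 a₁ a₂ b₁ b₂ (xi1 a₁ b₁ x₀ y₀ z₀) (xi2 a₂ b₂ x₀ y₀ z₀) R)
        (zeta a₁ a₂ b₁ b₂ x₀ y₀ z₀ + zeta a₁ a₂ b₁ b₂ u v t)) ∨
    (∀ u v t : ℝ, xi2 a₂ b₂ u v t = 0 →
      ENNReal.ofReal (‖(xi1 a₁ b₁ u v t)‖) < R →
      ENNReal.ofReal (‖(xi2 a₂ b₂ u v t)‖) < R →
      TendstoInftyAt Φ (K0 a₁ a₂ b₁ b₂ (xi1 a₁ b₁ x₀ y₀ z₀) (xi2 a₂ b₂ x₀ y₀ z₀) R)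
        (zeta a₁ a₂ b₁ b₂ x₀ y₀ z₀ + zeta a₁ a₂ b₁ b₂ u v t)) := by
  have hΦK := fun q (hq : q ∈ K0 _ _ _ _ _ _ R) => coord_ne_and_eq_basis_of_mem_K0 hΦ hq
  by_cases h13 : ∃ n < 0, a n ≠ 0 ∨ c n ≠ 0
  · have hpole := tendsto_max_norm_atTop_of_hasSum_laurent
      (eventually_nhdsNE_of_forall_punctured_eball hR ha)
      (eventually_nhdsNE_of_forall_punctured_eball hR hc)
      (hfin.imp fun _ h n hn => ⟨(h n hn).1, (h n hn).2.2.1⟩) h13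
    refine Or.inl fun u v t hu _ _ => tendstoInftyAt_K0_of_coord1 hΦK hpole ?_
    rw [coord1_add, coord1_zeta, coord1_zeta, hu, add_zero]
  · have h24 : ∃ n < 0, b n ≠ 0 ∨ d n ≠ 0 := by
      obtain ⟨n, hn, hne⟩ := hnz
      push Not at h13
      exact ⟨n, hn, by have := h13 n hn; tauto⟩
    have hpole := tendsto_max_norm_atTop_of_hasSum_laurent
      (eventually_nhdsNE_of_forall_punctured_eball hR hb)
      (eventually_nhdsNE_of_forall_punctured_eball hR hd)
      (hfin.imp fun _ h n hn => ⟨(h n hn).2.1, (h n hn).2.2.2⟩) h24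
    refine Or.inr fun u v t hu _ _ => tendstoInftyAt_K0_of_coord2 hΦK hpole ?_
    rw [coord2_add, coord2_zeta, coord2_zeta, hu, add_zero]

/-- Classification of singularities, pole case: if the principal part of
the Laurent expansion of Φ is nonzero but contains only finitely many terms, then there
is k ∈ {1,2} such that ‖Φ(ζ)‖ → ∞ as ζ → w, ζ ∈ K⁰_ζ, at every point w = ζ₀ + e* of
K̃⁰_ζ with e* ∈ L^k_ζ. -/
theorem singularity_pole
    (a₁ a₂ b₁ b₂ : ℂ)
    (hind : ∀ α β γ : ℝ,
      (α : ℂ) • (1 : HC) + (β : ℂ) • i2 a₁ a₂ + (γ : ℂ) • i3 b₁ b₂ = 0 →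
        α = 0 ∧ β = 0 ∧ γ = 0)
    (hsurj1 : ∀ w : ℂ, ∃ x y z : ℝ, w = xi1 a₁ b₁ x y z)
    (hsurj2 : ∀ w : ℂ, ∃ x y z : ℝ, w = xi2 a₂ b₂ x y z)
    (x₀ y₀ z₀ : ℝ) (R : ENNReal) (hR : 0 < R)
    (F₁ F₂ F₃ F₄ : ℂ → ℂ)
    (hF₁ : DifferentiableOn ℂ F₁
      {ξ : ℂ | 0 < ‖(ξ - xi1 a₁ b₁ x₀ y₀ z₀)‖ ∧
        ENNReal.ofReal (‖(ξ - xi1 a₁ b₁ x₀ y₀ z₀)‖) < R})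
    (hF₃ : DifferentiableOn ℂ F₃
      {ξ : ℂ | 0 < ‖(ξ - xi1 a₁ b₁ x₀ y₀ z₀)‖ ∧
        ENNReal.ofReal (‖(ξ - xi1 a₁ b₁ x₀ y₀ z₀)‖) < R})
    (hF₂ : DifferentiableOn ℂ F₂
      {ξ : ℂ | 0 < ‖(ξ - xi2 a₂ b₂ x₀ y₀ z₀)‖ ∧
        ENNReal.ofReal (‖(ξ - xi2 a₂ b₂ x₀ y₀ z₀)‖) < R})
    (hF₄ : DifferentiableOn ℂ F₄
      {ξ : ℂ | 0 < ‖(ξ - xi2 a₂ b₂ x₀ y₀ z₀)‖ ∧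
        ENNReal.ofReal (‖(ξ - xi2 a₂ b₂ x₀ y₀ z₀)‖) < R})
    (Φ : HC → HC)
    (hΦ : ∀ x y z : ℝ,
      0 < ‖(xi1 a₁ b₁ x y z - xi1 a₁ b₁ x₀ y₀ z₀)‖ →
      ENNReal.ofReal (‖(xi1 a₁ b₁ x y z - xi1 a₁ b₁ x₀ y₀ z₀)‖) < R →
      0 < ‖(xi2 a₂ b₂ x y z - xi2 a₂ b₂ x₀ y₀ z₀)‖ →
      ENNReal.ofReal (‖(xi2 a₂ b₂ x y z - xi2 a₂ b₂ x₀ y₀ z₀)‖) < R →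
      Φ (zeta a₁ a₂ b₁ b₂ x y z) =
        F₁ (xi1 a₁ b₁ x y z) • e1 + F₂ (xi2 a₂ b₂ x y z) • e2 +
        F₃ (xi1 a₁ b₁ x y z) • e3 + F₄ (xi2 a₂ b₂ x y z) • e4)
    (a b c d : ℤ → ℂ)
    (ha : ∀ ξ : ℂ, 0 < ‖(ξ - xi1 a₁ b₁ x₀ y₀ z₀)‖ →
      ENNReal.ofReal (‖(ξ - xi1 a₁ b₁ x₀ y₀ z₀)‖) < R →
      HasSum (fun n : ℤ => a n * (ξ - xi1 a₁ b₁ x₀ y₀ z₀) ^ n) (F₁ ξ))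
    (hc : ∀ ξ : ℂ, 0 < ‖(ξ - xi1 a₁ b₁ x₀ y₀ z₀)‖ →
      ENNReal.ofReal (‖(ξ - xi1 a₁ b₁ x₀ y₀ z₀)‖) < R →
      HasSum (fun n : ℤ => c n * (ξ - xi1 a₁ b₁ x₀ y₀ z₀) ^ n) (F₃ ξ))
    (hb : ∀ ξ : ℂ, 0 < ‖(ξ - xi2 a₂ b₂ x₀ y₀ z₀)‖ →
      ENNReal.ofReal (‖(ξ - xi2 a₂ b₂ x₀ y₀ z₀)‖) < R →
      HasSum (fun n : ℤ => b n * (ξ - xi2 a₂ b₂ x₀ y₀ z₀) ^ n) (F₂ ξ))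
    (hd : ∀ ξ : ℂ, 0 < ‖(ξ - xi2 a₂ b₂ x₀ y₀ z₀)‖ →
      ENNReal.ofReal (‖(ξ - xi2 a₂ b₂ x₀ y₀ z₀)‖) < R →
      HasSum (fun n : ℤ => d n * (ξ - xi2 a₂ b₂ x₀ y₀ z₀) ^ n) (F₄ ξ))
    (hfin : ∃ N : ℤ, ∀ n : ℤ, n < N → a n = 0 ∧ b n = 0 ∧ c n = 0 ∧ d n = 0)
    (hnz : ∃ n : ℤ, n < 0 ∧ (a n ≠ 0 ∨ b n ≠ 0 ∨ c n ≠ 0 ∨ d n ≠ 0)) :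
    (∀ u v t : ℝ, xi1 a₁ b₁ u v t = 0 →
      ENNReal.ofReal (‖(xi1 a₁ b₁ u v t)‖) < R →
      ENNReal.ofReal (‖(xi2 a₂ b₂ u v t)‖) < R →
      TendstoInftyAt Φ (K0 a₁ a₂ b₁ b₂ (xi1 a₁ b₁ x₀ y₀ z₀) (xi2 a₂ b₂ x₀ y₀ z₀) R)
        (zeta a₁ a₂ b₁ b₂ x₀ y₀ z₀ + zeta a₁ a₂ b₁ b₂ u v t)) ∨
    (∀ u v t : ℝ, xi2 a₂ b₂ u v t = 0 →
      ENNReal.ofReal (‖(xi1 a₁ b₁ u v t)‖) < R →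
      ENNReal.ofReal (‖(xi2 a₂ b₂ u v t)‖) < R →
      TendstoInftyAt Φ (K0 a₁ a₂ b₁ b₂ (xi1 a₁ b₁ x₀ y₀ z₀) (xi2 a₂ b₂ x₀ y₀ z₀) R)
        (zeta a₁ a₂ b₁ b₂ x₀ y₀ z₀ + zeta a₁ a₂ b₁ b₂ u v t)) :=
  singularity_pole_general a₁ a₂ b₁ b₂ x₀ y₀ z₀ R hR F₁ F₂ F₃ F₄ Φ hΦ a b c d ha hc hb hd hfin hnz
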